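/- Let X be a finite pure n-dimensional weighted simplicial complex which is (n+1)-partite with sides S_0,…,S_n. Then for every 0 ≤ k ≤ n, every 0 ≤ j ≤ n, and every φ ∈ C^k(X,ℝ): k! ⟨Δ^−_{(k,j)} φ, φ⟩ = Σ_{τ ∈ Σ(k−1)} ⟨Δ^−_{τ,(0,j)} φ_τ, φ_τ⟩, where the inner products on the right-hand side are taken in the links X_τ. -/

import Mathlib

open Finset

variable {V : Type} [Fintype V] [DecidableEq V]

/-- A finite abstract simplicial complex on the vertex type `V`. -/
structure SComplex (V : Type) [Fintype V] [DecidableEq V] where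
  faces : Finset (Finset V)
  empty_mem : ∅ ∈ faces
  down_closed : ∀ s ∈ faces, ∀ t, t ⊆ s → t ∈ faces

namespace SComplex

/-- `X` is pure `n`-dimensional: every face is contained in an `n`-dimensional face. -/
def Pure (X : SComplex V) (n : ℕ) : Prop :=
  (∀ s ∈ X.faces, s.card ≤ n + 1) ∧
    ∀ s ∈ X.faces, ∃ t ∈ X.faces, s ⊆ t ∧ t.card = n + 1

/-- `σ` is an ordered simplex with `j` vertices (an element of `Σ(j-1)`). -/
def IsOSimp (X : SComplex V) {j : ℕ} (σ : Fin j → V) : Prop :=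
  Function.Injective σ ∧ Finset.image σ Finset.univ ∈ X.faces

instance {j : ℕ} (X : SComplex V) (σ : Fin j → V) : Decidable (X.IsOSimp σ) := by
  unfold IsOSimp; infer_instance

/-- A balanced, strictly positive weight function on the simplices of `X`. -/
def IsBalanced (X : SComplex V) (n : ℕ) (m : Finset V → ℝ) : Prop :=
  (∀ s ∈ X.faces, 0 < m s) ∧
    ∀ s ∈ X.faces, s.card ≤ n →
      m s = ∑ t ∈ X.faces.filter fun t => s ⊆ t ∧ t.card = s.card + 1, m t

/-- The weight of an ordered tuple (zero off the ordered simplices). -/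
noncomputable def wt (X : SComplex V) (m : Finset V → ℝ) {j : ℕ} (σ : Fin j → V) : ℝ :=
  if X.IsOSimp σ then m (Finset.image σ Finset.univ) else 0

/-- `φ` is a `j`-vertex form, i.e. an element of `C^{j-1}(X,ℝ)`:
antisymmetric and supported on the ordered simplices. -/
def IsForm (X : SComplex V) (j : ℕ) (φ : (Fin j → V) → ℝ) : Prop :=
  (∀ (σ : Fin j → V) (π : Equiv.Perm (Fin j)),
      φ (σ ∘ π) = ((Equiv.Perm.sign π : ℤ) : ℝ) * φ σ) ∧
    ∀ σ : Fin j → V, ¬X.IsOSimp σ → φ σ = 0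

/-- The inner product on `j`-vertex forms (`C^{j-1}(X,ℝ)`). -/
noncomputable def innerF (X : SComplex V) (m : Finset V → ℝ) (j : ℕ)
    (φ ψ : (Fin j → V) → ℝ) : ℝ :=
  ∑ σ : Fin j → V, X.wt m σ / (Nat.factorial j : ℝ) * (φ σ * ψ σ)

/-- The sum of a quantity over all ordered simplices with `j` vertices. -/
noncomputable def sumOSimp (X : SComplex V) (j : ℕ) (F : (Fin j → V) → ℝ) : ℝ :=
  ∑ σ : Fin j → V, if X.IsOSimp σ then F σ else 0

/-- The simplicial differential `d`. -/
def dOp {j : ℕ} (φ : (Fin j → V) → ℝ) : (Fin (j + 1) → V) → ℝ :=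
  fun σ => ∑ i : Fin (j + 1), (-1 : ℝ) ^ (i : ℕ) * φ (σ ∘ i.succAbove)

/-- The codifferential `δ` (the adjoint of `d`). -/
noncomputable def deltaOp (X : SComplex V) (m : Finset V → ℝ) {j : ℕ}
    (φ : (Fin (j + 1) → V) → ℝ) : (Fin j → V) → ℝ :=
  fun τ => ∑ v : V, X.wt m (Fin.cons v τ) / X.wt m τ * φ (Fin.cons v τ)

/-- The upper Laplacian `Δ⁺` on `j`-vertex forms (`C^{j-1}`). -/
noncomputable def lapPlus (X : SComplex V) (m : Finset V → ℝ) (j : ℕ)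
    (φ : (Fin j → V) → ℝ) : (Fin j → V) → ℝ :=
  X.deltaOp m (dOp φ)

/-- The lower Laplacian `Δ⁻` on `(j+1)`-vertex forms (`C^j`). -/
noncomputable def lapMinus (X : SComplex V) (m : Finset V → ℝ) (j : ℕ)
    (φ : (Fin (j + 1) → V) → ℝ) : (Fin (j + 1) → V) → ℝ :=
  dOp (X.deltaOp m φ)

/-- The set of eigenvalues of `Δ⁺` on `j`-vertex forms. -/
def specLapPlus (X : SComplex V) (m : Finset V → ℝ) (j : ℕ) : Set ℝ :=
  {μ | ∃ φ : (Fin j → V) → ℝ, X.IsForm j φ ∧ φ ≠ 0 ∧ X.lapPlus m j φ = μ • φ}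

/-- The set of eigenvalues of `Δ⁻` on `(j+1)`-vertex forms (`C^j`). -/
def specLapMinus (X : SComplex V) (m : Finset V → ℝ) (j : ℕ) : Set ℝ :=
  {μ | ∃ φ : (Fin (j + 1) → V) → ℝ, X.IsForm (j + 1) φ ∧ φ ≠ 0 ∧ X.lapMinus m j φ = μ • φ}

/-- The link of a face `s`. -/
def link (X : SComplex V) (s : Finset V) : SComplex V where
  faces := insert ∅ (X.faces.filter fun t => Disjoint s t ∧ s ∪ t ∈ X.faces)
  empty_mem := Finset.mem_insert_self _ _
  down_closed := by
    intro a ha t hts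
    rcases Finset.mem_insert.mp ha with h | h
    · refine Finset.mem_insert.mpr (Or.inl ?_)
      subst h; exact Finset.subset_empty.mp hts
    · rw [Finset.mem_filter] at h
      refine Finset.mem_insert.mpr (Or.inr (Finset.mem_filter.mpr
        ⟨X.down_closed a h.1 t hts, Disjoint.mono_right hts h.2.1,
          X.down_closed _ h.2.2 _ (Finset.union_subset_union (Finset.Subset.refl s) hts)⟩))

/-- The induced (balanced) weight on the link of `s`. -/
def linkWt (m : Finset V → ℝ) (s : Finset V) : Finset V → ℝ := fun t => m (s ∪ t)

/-- The graph given by the 1-skeleton of `X`. -/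
def skeleton (X : SComplex V) : SimpleGraph V where
  Adj u v := u ≠ v ∧ ({u, v} : Finset V) ∈ X.faces
  symm := by
    constructor
    intro u v h
    exact ⟨h.1.symm, by rw [Finset.pair_comm]; exact h.2⟩
  loopless := ⟨fun u h => h.1 rfl⟩

/-- The 1-skeleton of `X` is connected (on the vertices of `X`). -/
def SkelConnected (X : SComplex V) : Prop :=
  ∀ u v : V, ({u} : Finset V) ∈ X.faces → ({v} : Finset V) ∈ X.faces →
    X.skeleton.Reachable u v

/-- The 1-skeleton of `X` and the 1-skeletons of all links of `X` of dimension `> 0`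
are connected. -/
def AllLinksConnected (X : SComplex V) (n : ℕ) : Prop :=
  X.SkelConnected ∧ ∀ s ∈ X.faces, s.card < n → (X.link s).SkelConnected

/-- The localization `φ_τ ∈ C⁰(X_τ)` of a `(k+1)`-vertex form `φ` at an ordered
`k`-vertex simplex `τ`. -/
def localize {k : ℕ} (φ : (Fin (k + 1) → V) → ℝ) (τ : Fin k → V) : (Fin 1 → V) → ℝ :=
  fun σ => φ (Fin.append τ σ)

/-- The restriction of a cochain to the subcomplex `Y` (truncating off `Y`). -/
def restrict (Y : SComplex V) {j : ℕ} (φ : (Fin j → V) → ℝ) : (Fin j → V) → ℝ :=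
  fun σ => if Y.IsOSimp σ then φ σ else 0

/-- `S` is an `(n+1)`-partition of `X`: the vertices of `X` are partitioned into the
sides `S i`, and every edge joins two distinct sides. -/
def IsPartition (X : SComplex V) (n : ℕ) (S : Fin (n + 1) → Finset V) : Prop :=
  (∀ i, ∀ v ∈ S i, ({v} : Finset V) ∈ X.faces) ∧
    (∀ v : V, ({v} : Finset V) ∈ X.faces → ∃! i, v ∈ S i) ∧
    ∀ u v : V, u ≠ v → ({u, v} : Finset V) ∈ X.faces → ∀ i, u ∈ S i → v ∉ S i

/-- The side differential `d_{(k,j)}` with respect to the side `S`. -/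
def dSide (S : Finset V) {j : ℕ} (φ : (Fin j → V) → ℝ) : (Fin (j + 1) → V) → ℝ :=
  fun σ => ∑ i : Fin (j + 1),
    if σ i ∈ S then (-1 : ℝ) ^ (i : ℕ) * φ (σ ∘ i.succAbove) else 0

/-- The adjoint `δ_{(k,j)}` of the side differential. -/
noncomputable def deltaSide (X : SComplex V) (m : Finset V → ℝ) (S : Finset V) {j : ℕ}
    (φ : (Fin (j + 1) → V) → ℝ) : (Fin j → V) → ℝ :=
  fun τ => ∑ v ∈ S, X.wt m (Fin.cons v τ) / X.wt m τ * φ (Fin.cons v τ)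

/-- The side lower Laplacian `Δ⁻_{(k,j)}` on `(j+1)`-vertex forms (`C^j`). -/
noncomputable def lapMinusSide (X : SComplex V) (m : Finset V → ℝ) (S : Finset V) (j : ℕ)
    (φ : (Fin (j + 1) → V) → ℝ) : (Fin (j + 1) → V) → ℝ :=
  dSide S (X.deltaSide m S φ)

end SComplex

open SComplex

/-! Both sides equal `∑_τ m(τ) (δ_{(k-1,j)} φ)(τ)²`. On the left this is the adjointness
`⟨d_{(k-1,j)} ψ, φ⟩ = ⟨ψ, δ_{(k-1,j)} φ⟩` applied to `ψ = δ_{(k-1,j)} φ`. On the right it is the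
same identity for `k = 0` in the link `X_τ`, whose value `m_τ(∅) (δ φ_τ)(∅)²` is the `τ`-term,
because `m_τ(v) = m(vτ)` and `φ_τ(v) = ± φ(vτ)`, so that `(δ φ_τ)(∅) = ± (δ φ)(τ)`. -/

namespace SComplex

def IsAntisymmetric {α : Type*} {j : ℕ} (φ : (Fin j → α) → ℝ) : Prop :=
  ∀ (σ : Fin j → α) (π : Equiv.Perm (Fin j)), φ (σ ∘ π) = ((Equiv.Perm.sign π : ℤ) : ℝ) * φ σ

theorem isAntisymmetric_of_fin_one {α : Type*} (ψ : (Fin 1 → α) → ℝ) : IsAntisymmetric ψ := by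
  intro σ π
  rw [Subsingleton.elim π 1, Equiv.Perm.sign_one]
  simp

theorem insertNth_eq_cons_comp_cycleRange {α : Type*} {k : ℕ} (i : Fin (k + 1)) (v : α)
    (τ : Fin k → α) : i.insertNth v τ = Fin.cons v τ ∘ ⇑(Fin.cycleRange i) := by
  funext j
  refine Fin.succAboveCases
    (α := fun j => i.insertNth (α := fun _ => α) v τ j = (Fin.cons v τ ∘ ⇑(Fin.cycleRange i)) j)
    i ?_ ?_ j
  · simp [Fin.cycleRange_self]
  · intro j'
    simp [Fin.cycleRange_succAbove]

theorem IsAntisymmetric.apply_insertNth {α : Type*} {k : ℕ} {φ : (Fin (k + 1) → α) → ℝ}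
    (hφ : IsAntisymmetric φ) (i : Fin (k + 1)) (v : α) (τ : Fin k → α) :
    φ (i.insertNth v τ) = (-1) ^ (i : ℕ) * φ (Fin.cons v τ) := by
  rw [insertNth_eq_cons_comp_cycleRange, hφ, Fin.sign_cycleRange]
  push_cast
  rfl

theorem localize_apply {α : Type} {k : ℕ} {φ : (Fin (k + 1) → α) → ℝ}
    (hφ : IsAntisymmetric φ) (τ : Fin k → α) (g : Fin 1 → α) :
    localize φ τ g = (-1) ^ k * φ (Fin.cons (g 0) τ) := by
  rw [localize, Fin.append_right_eq_snoc, ← Fin.insertNth_last', hφ.apply_insertNth]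
  simp

theorem image_cons {α : Type*} [DecidableEq α] {k : ℕ} (v : α) (τ : Fin k → α) :
    image (Fin.cons v τ : Fin (k + 1) → α) univ = insert v (image τ univ) := by
  ext x
  simp [Fin.exists_fin_succ, eq_comm]

theorem IsOSimp.of_cons {X : SComplex V} {k : ℕ} {v : V} {τ : Fin k → V}
    (h : X.IsOSimp (Fin.cons v τ)) : X.IsOSimp τ :=
  ⟨(Fin.cons_injective_iff.mp h.1).2,
    X.down_closed _ h.2 _ (by rw [image_cons]; exact subset_insert _ _)⟩

variable (X : SComplex V) (m : Finset V → ℝ)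

theorem wt_comp_perm {j : ℕ} (σ : Fin j → V) (π : Equiv.Perm (Fin j)) :
    X.wt m (σ ∘ π) = X.wt m σ := by
  have himage : image (σ ∘ π) univ = image σ univ := by
    rw [← image_image, image_univ_equiv]
  simp only [wt, IsOSimp, himage, Equiv.injective_comp]

theorem wt_of_not_isOSimp {j : ℕ} {σ : Fin j → V} (hσ : ¬X.IsOSimp σ) : X.wt m σ = 0 :=
  if_neg hσ

variable {X m}

theorem wt_mul_deltaSide (hpos : ∀ s ∈ X.faces, 0 < m s) (S : Finset V) {k : ℕ}
    (φ : (Fin (k + 1) → V) → ℝ) (τ : Fin k → V) :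
    X.wt m τ * X.deltaSide m S φ τ = ∑ v ∈ S, X.wt m (Fin.cons v τ) * φ (Fin.cons v τ) := by
  rw [deltaSide, mul_sum]
  refine sum_congr rfl fun v _ => ?_
  by_cases hτ : X.IsOSimp τ
  · have hwt : X.wt m τ ≠ 0 := by rw [wt, if_pos hτ]; exact (hpos _ hτ.2).ne'
    field_simp
  · rw [X.wt_of_not_isOSimp m hτ, X.wt_of_not_isOSimp m fun h => hτ h.of_cons]
    ring

/-- Summing over `σ = i.insertNth v τ`, the sign `(-1)^i` of `d_S` is cancelled by the
antisymmetry of `φ`. -/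
theorem sum_dSide_summand_mul (hpos : ∀ s ∈ X.faces, 0 < m s) (S : Finset V) {k : ℕ}
    (i : Fin (k + 1)) (ψ : (Fin k → V) → ℝ) {φ : (Fin (k + 1) → V) → ℝ}
    (hφ : IsAntisymmetric φ) :
    ∑ σ : Fin (k + 1) → V,
        (if σ i ∈ S then (-1) ^ (i : ℕ) * ψ (σ ∘ i.succAbove) else 0) * (X.wt m σ * φ σ) =
      ∑ τ : Fin k → V, ψ τ * (X.wt m τ * X.deltaSide m S φ τ) := by
  rw [← (Fin.insertNthEquiv (fun _ : Fin (k + 1) => V) i).sum_comp, Fintype.sum_prod_type,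
    sum_comm]
  refine sum_congr rfl fun τ _ => ?_
  have hsign : ((-1 : ℝ) ^ (i : ℕ)) ^ 2 = 1 := by rw [← pow_mul, pow_mul']; simp
  have hwt : ∀ v, X.wt m (i.insertNth v τ) = X.wt m (Fin.cons v τ) := fun v => by
    rw [insertNth_eq_cons_comp_cycleRange, wt_comp_perm]
  have happly : ∀ v, Fin.insertNthEquiv (fun _ : Fin (k + 1) => V) i (v, τ) = i.insertNth v τ :=
    fun _ => rfl
  simp only [happly, Fin.insertNth_apply_same, Fin.insertNth_comp_succAbove, hwt,
    hφ.apply_insertNth, wt_mul_deltaSide hpos, mul_sum, ite_mul, zero_mul, sum_ite_mem, univ_inter]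
  refine sum_congr rfl fun v _ => ?_
  linear_combination ψ τ * X.wt m (Fin.cons v τ) * φ (Fin.cons v τ) * hsign

theorem innerF_dSide (hpos : ∀ s ∈ X.faces, 0 < m s) (S : Finset V) {k : ℕ}
    (ψ : (Fin k → V) → ℝ) {φ : (Fin (k + 1) → V) → ℝ} (hφ : IsAntisymmetric φ) :
    X.innerF m (k + 1) (dSide S ψ) φ = X.innerF m k ψ (X.deltaSide m S φ) := by
  have hexpand : X.innerF m (k + 1) (dSide S ψ) φ =
      (Nat.factorial (k + 1) : ℝ)⁻¹ * ∑ i : Fin (k + 1), ∑ σ : Fin (k + 1) → V,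
        (if σ i ∈ S then (-1) ^ (i : ℕ) * ψ (σ ∘ i.succAbove) else 0) * (X.wt m σ * φ σ) := by
    simp only [innerF, dSide, sum_comm (γ := Fin (k + 1)), mul_sum, sum_mul]
    refine sum_congr rfl fun σ _ => sum_congr rfl fun i _ => ?_
    ring
  rw [hexpand]
  simp only [sum_dSide_summand_mul hpos S _ ψ hφ, sum_const, card_univ, Fintype.card_fin,
    nsmul_eq_mul, innerF, mul_sum, Nat.factorial_succ]
  refine sum_congr rfl fun τ _ => ?_
  push_cast
  field_simp

theorem factorial_mul_innerF_lapMinusSide_self (hpos : ∀ s ∈ X.faces, 0 < m s)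
    (S : Finset V) {k : ℕ} {φ : (Fin (k + 1) → V) → ℝ} (hφ : IsAntisymmetric φ) :
    (Nat.factorial k : ℝ) * X.innerF m (k + 1) (X.lapMinusSide m S k φ) φ =
      ∑ τ : Fin k → V, X.wt m τ * X.deltaSide m S φ τ ^ 2 := by
  rw [lapMinusSide, innerF_dSide hpos S _ hφ, innerF, mul_sum]
  refine sum_congr rfl fun τ _ => ?_
  field_simp

theorem singleton_mem_link_iff {s : Finset V} {v : V} :
    {v} ∈ (X.link s).faces ↔ v ∉ s ∧ insert v s ∈ X.faces := by
  have hunion : s ∪ {v} = insert v s := by rw [union_comm, insert_eq]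
  simp only [link, mem_insert, mem_filter, singleton_ne_empty, false_or,
    disjoint_singleton_right, hunion]
  exact ⟨fun h => h.2, fun h => ⟨X.down_closed _ h.2 _ (by simp), h⟩⟩

theorem isOSimp_link_iff {k : ℕ} {τ : Fin k → V} (hτ : X.IsOSimp τ) (g : Fin 1 → V) :
    (X.link (image τ univ)).IsOSimp g ↔ X.IsOSimp (Fin.cons (g 0) τ) := by
  have himage : image g univ = {g 0} := by rw [univ_unique, image_singleton]; rfl
  simp only [IsOSimp, himage, singleton_mem_link_iff, image_cons, Fin.cons_injective_iff,
    Function.injective_of_subsingleton, hτ.1, true_and, and_true, mem_image, mem_univ,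
    Set.mem_range]

theorem wt_link_of_fin_one {k : ℕ} {τ : Fin k → V} (hτ : X.IsOSimp τ) (g : Fin 1 → V) :
    (X.link (image τ univ)).wt (linkWt m (image τ univ)) g = X.wt m (Fin.cons (g 0) τ) := by
  have himage : image g univ = {g 0} := by rw [univ_unique, image_singleton]; rfl
  simp only [wt, X.isOSimp_link_iff hτ, himage, image_cons, linkWt, union_comm _ {g 0},
    ← insert_eq]

theorem wt_link_of_fin_zero {k : ℕ} {τ : Fin k → V} (hτ : X.IsOSimp τ) (e : Fin 0 → V) :
    (X.link (image τ univ)).wt (linkWt m (image τ univ)) e = X.wt m τ := by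
  have hempty : (X.link (image τ univ)).IsOSimp e :=
    ⟨Function.injective_of_subsingleton e, by simpa using (X.link _).empty_mem⟩
  simp [wt, hempty, hτ, linkWt]

theorem linkWt_pos (hpos : ∀ s ∈ X.faces, 0 < m s) {s : Finset V} (hs : s ∈ X.faces) :
    ∀ t ∈ (X.link s).faces, 0 < linkWt m s t := by
  intro t ht
  rcases mem_insert.mp ht with rfl | ht
  · simpa [linkWt] using hpos s hs
  · exact hpos _ (mem_filter.mp ht).2.2

theorem deltaSide_link_localize (S : Finset V) {k : ℕ} {φ : (Fin (k + 1) → V) → ℝ}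
    (hφ : IsAntisymmetric φ) {τ : Fin k → V} (hτ : X.IsOSimp τ) (e : Fin 0 → V) :
    (X.link (image τ univ)).deltaSide (linkWt m (image τ univ)) S (localize φ τ) e =
      (-1) ^ k * X.deltaSide m S φ τ := by
  simp only [deltaSide, wt_link_of_fin_one hτ, wt_link_of_fin_zero hτ,
    localize_apply hφ, Fin.cons_zero, mul_sum]
  refine sum_congr rfl fun v _ => ?_
  ring

theorem innerF_link_lapMinusSide_localize (hpos : ∀ s ∈ X.faces, 0 < m s) (S : Finset V)
    {k : ℕ} {φ : (Fin (k + 1) → V) → ℝ} (hφ : IsAntisymmetric φ) {τ : Fin k → V}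
    (hτ : X.IsOSimp τ) :
    (X.link (image τ univ)).innerF (linkWt m (image τ univ)) 1
        ((X.link (image τ univ)).lapMinusSide (linkWt m (image τ univ)) S 0 (localize φ τ))
        (localize φ τ) =
      X.wt m τ * X.deltaSide m S φ τ ^ 2 := by
  have hlink := factorial_mul_innerF_lapMinusSide_self (linkWt_pos hpos hτ.2) S
    (isAntisymmetric_of_fin_one (localize φ τ))
  rw [Nat.factorial_zero, Nat.cast_one, one_mul] at hlink
  rw [hlink, Fintype.sum_unique, wt_link_of_fin_zero hτ, deltaSide_link_localize S hφ hτ,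
    mul_pow, ← pow_mul, pow_mul', neg_one_sq, one_pow, one_mul]

end SComplex

theorem partite_localization_of_side_laplacian_general
    (X : SComplex V) (n : ℕ) (m : Finset V → ℝ) (S : Fin (n + 1) → Finset V)
    (hm : X.IsBalanced n m)
    (k : ℕ) (j : Fin (n + 1))
    (φ : (Fin (k + 1) → V) → ℝ) (hφ : X.IsForm (k + 1) φ) :
    (Nat.factorial k : ℝ) * X.innerF m (k + 1) (X.lapMinusSide m (S j) k φ) φ =
      X.sumOSimp k fun τ =>
        (X.link (Finset.image τ Finset.univ)).innerF
          (linkWt m (Finset.image τ Finset.univ)) 1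
          ((X.link (Finset.image τ Finset.univ)).lapMinusSide
            (linkWt m (Finset.image τ Finset.univ)) (S j) 0 (localize φ τ))
          (localize φ τ) := by
  rw [factorial_mul_innerF_lapMinusSide_self hm.1 (S j) hφ.1, sumOSimp]
  refine Fintype.sum_congr _ _ fun τ => ?_
  split_ifs with hτ
  · exact (innerF_link_lapMinusSide_localize hm.1 (S j) hφ.1 hτ).symm
  · rw [X.wt_of_not_isOSimp m hτ, zero_mul]

/-- Proposition 3.9: localization of the side lower Laplacians in a partite
complex: `k!⟨Δ⁻_{(k,j)}φ,φ⟩ = ∑_{τ∈Σ(k-1)} ⟨Δ⁻_{τ,(0,j)}φ_τ,φ_τ⟩`. -/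
theorem partite_localization_of_side_laplacian
    (X : SComplex V) (n : ℕ) (m : Finset V → ℝ) (S : Fin (n + 1) → Finset V)
    (hpure : X.Pure n) (hm : X.IsBalanced n m) (hpart : X.IsPartition n S)
    (k : ℕ) (hk : k ≤ n) (j : Fin (n + 1))
    (φ : (Fin (k + 1) → V) → ℝ) (hφ : X.IsForm (k + 1) φ) :
    (Nat.factorial k : ℝ) * X.innerF m (k + 1) (X.lapMinusSide m (S j) k φ) φ =
      X.sumOSimp k fun τ =>
        (X.link (Finset.image τ Finset.univ)).innerF
          (linkWt m (Finset.image τ Finset.univ)) 1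
          ((X.link (Finset.image τ Finset.univ)).lapMinusSide
            (linkWt m (Finset.image τ Finset.univ)) (S j) 0 (localize φ τ))
          (localize φ τ) :=
  partite_localization_of_side_laplacian_general X n m S hm k j φ hφ
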